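/- arXiv:1306.5375 — 7 statements merged into one kernel-verified Lean document; each statement's English description precedes it below -/
import Mathlib

section
/- For all real β with 0 < β < π and all real θ, we have |−2cos β + 4e^{−iθ}cos²β − 3e^{−iθ} + e^{iθ}| ≤ |4 − 2cos²β − 2cos β cos θ|. -/
/-! With `c = cos β`, the left-hand side is the modulus of
`(-2c + (4c² - 2) cos θ) + (4 - 4c²) sin θ · i`, and the square of the right-hand side exceeds
its square by `12 (1 - c²) (c - cos θ)² ≥ 0`. -/

lemma exp_combination_eq (c θ : ℝ) :
    -2 * (c : ℂ) + 4 * Complex.exp (-Complex.I * θ) * (c : ℂ) ^ 2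
        - 3 * Complex.exp (-Complex.I * θ) + Complex.exp (Complex.I * θ) =
      ⟨-2 * c + (4 * c ^ 2 - 2) * Real.cos θ, (4 - 4 * c ^ 2) * Real.sin θ⟩ := by
  have h_neg : Complex.exp (-Complex.I * θ) = Real.cos θ - Real.sin θ * Complex.I := by
    rw [show -Complex.I * θ = ((-θ : ℝ) : ℂ) * Complex.I by push_cast; ring, Complex.exp_mul_I]
    simp only [← Complex.ofReal_cos, ← Complex.ofReal_sin, Real.cos_neg, Real.sin_neg]
    push_cast
    ring
  have h_pos : Complex.exp (Complex.I * θ) = Real.cos θ + Real.sin θ * Complex.I := by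
    rw [mul_comm, Complex.exp_mul_I, ← Complex.ofReal_cos, ← Complex.ofReal_sin]
  rw [h_neg, h_pos, Complex.mk_eq_add_mul_I]
  push_cast
  ring

lemma sq_sub_sq_eq (c x s : ℝ) (hxs : s ^ 2 + x ^ 2 = 1) :
    (4 - 2 * c ^ 2 - 2 * c * x) ^ 2
        - ((-2 * c + (4 * c ^ 2 - 2) * x) ^ 2 + ((4 - 4 * c ^ 2) * s) ^ 2) =
      12 * (1 - c ^ 2) * (c - x) ^ 2 := by
  linear_combination (-(4 - 4 * c ^ 2) ^ 2) * hxs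

theorem stmt_0_general (β θ : ℝ) :
    ‖(-2 * Real.cos β + 4 * Complex.exp (-Complex.I * θ) * (Real.cos β) ^ 2
        - 3 * Complex.exp (-Complex.I * θ) + Complex.exp (Complex.I * θ))‖ ≤
      |4 - 2 * Real.cos β ^ 2 - 2 * Real.cos β * Real.cos θ| := by
  set c := Real.cos β
  have hc : c ^ 2 ≤ 1 := by simpa [c] using Real.cos_sq_le_one β
  rw [exp_combination_eq, ← abs_norm, ← sq_le_sq, Complex.sq_norm, Complex.normSq_mk]
  have h_gap := sq_sub_sq_eq c (Real.cos θ) (Real.sin θ) (Real.sin_sq_add_cos_sq θ)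
  linarith [mul_nonneg (sub_nonneg.2 hc) (sq_nonneg (c - Real.cos θ))]

theorem stmt_0 (β θ : ℝ) (hβ0 : 0 < β) (hβπ : β < Real.pi) :
    ‖(-2 * Real.cos β + 4 * Complex.exp (-Complex.I * θ) * (Real.cos β) ^ 2
        - 3 * Complex.exp (-Complex.I * θ) + Complex.exp (Complex.I * θ))‖ ≤
      |4 - 2 * Real.cos β ^ 2 - 2 * Real.cos β * Real.cos θ| :=
  stmt_0_general β θ
end

section
/- For all real β with 0 < β < π and all real θ, we have |cos β (e^{−iθ} − 5)| < |6 − cos²β + 2e^{−iθ} − 3e^{−iθ}cos²β|. -/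
/-!
Put `u = cos² β ∈ [0, 1)` and `z = e^{-iθ}`. On the unit circle both sides are affine in `Re z`
after squaring, and the difference of the squares factors as `(1 - u)(4 - u)(10 + 6 Re z)`,
which is positive because `Re z ≥ -1`.
-/

open Complex Real

lemma Complex.normSq_sub_normSq_eq_of_norm_eq_one {z : ℂ} (hz : ‖z‖ = 1) (c : ℝ) :
    normSq (6 - (c : ℂ) ^ 2 + 2 * z - 3 * z * c ^ 2) - normSq ((c : ℂ) * (z - 5)) =
      (1 - c ^ 2) * (4 - c ^ 2) * (10 + 6 * z.re) := by
  have hz' : z.re ^ 2 + z.im ^ 2 = 1 := by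
    rw [← one_pow 2, ← hz, Complex.sq_norm, normSq_apply]; ring
  simp only [normSq_apply, sub_re, sub_im, add_re, add_im, mul_re, mul_im, ofReal_re, ofReal_im,
    pow_two, re_ofNat, im_ofNat]
  linear_combination (9 * c ^ 4 - 13 * c ^ 2 + 4) * hz'

lemma Complex.norm_mul_sub_five_lt {z : ℂ} (hz : ‖z‖ = 1) {c : ℝ} (hc : c ^ 2 < 1) :
    ‖(c : ℂ) * (z - 5)‖ < ‖6 - (c : ℂ) ^ 2 + 2 * z - 3 * z * c ^ 2‖ := by
  have hre : -1 ≤ z.re := by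
    have := abs_re_le_norm z
    rw [hz] at this
    exact (abs_le.mp this).1
  have hpos : 0 < (1 - c ^ 2) * (4 - c ^ 2) * (10 + 6 * z.re) := by
    apply mul_pos (mul_pos _ _) <;> linarith
  rw [← normSq_sub_normSq_eq_of_norm_eq_one hz, ← Complex.sq_norm, ← Complex.sq_norm,
    sub_pos] at hpos
  exact lt_of_pow_lt_pow_left₀ 2 (norm_nonneg _) hpos

lemma Real.cos_sq_lt_one_of_pos_of_lt_pi {β : ℝ} (hβ0 : 0 < β) (hβπ : β < π) : cos β ^ 2 < 1 := by
  rw [cos_sq']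
  linarith [pow_pos (sin_pos_of_pos_of_lt_pi hβ0 hβπ) 2]

theorem stmt_2 (β θ : ℝ) (hβ0 : 0 < β) (hβπ : β < Real.pi) :
    ‖(Real.cos β : ℂ) * (Complex.exp (-Complex.I * θ) - 5)‖ <
      ‖6 - (Real.cos β : ℂ) ^ 2 + 2 * Complex.exp (-Complex.I * θ)
        - 3 * Complex.exp (-Complex.I * θ) * (Real.cos β) ^ 2‖ := by
  have hz : ‖Complex.exp (-Complex.I * θ)‖ = 1 := by
    rw [show -Complex.I * θ = ((-θ : ℝ) : ℂ) * I by push_cast; ring]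
    exact norm_exp_ofReal_mul_I _
  exact Complex.norm_mul_sub_five_lt hz (cos_sq_lt_one_of_pos_of_lt_pi hβ0 hβπ)
end

section
/- For all real β with 0 < β < π, β ≠ π/2, and all real θ with θ not an integer multiple of 2π, we have |2(1 + e^{−iθ}) − 3e^{−iθ}cos²β| < |4 − cos²β|. -/
/-! Write `c = cos² β` and `z = e^{-iθ}`. The left-hand side is `‖2 + (2 - 3c) z‖ ≤ 2 + |2 - 3c|`,
and `2 + |2 - 3c| < 4 - c` exactly when `0 < c < 1`, which is what the conditions on `β` give. -/

open Complex Real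

lemma Complex.norm_two_add_mul_lt {c : ℝ} (hc0 : 0 < c) (hc1 : c < 1) {z : ℂ} (hz : ‖z‖ = 1) :
    ‖2 + ((2 - 3 * c : ℝ) : ℂ) * z‖ < 4 - c :=
  calc ‖2 + ((2 - 3 * c : ℝ) : ℂ) * z‖
      ≤ ‖(2 : ℂ)‖ + ‖((2 - 3 * c : ℝ) : ℂ) * z‖ := norm_add_le _ _
    _ = 2 + |2 - 3 * c| := by rw [norm_mul, hz, Complex.norm_real]; simp
    _ < 4 - c := by rcases abs_cases (2 - 3 * c) with ⟨h, _⟩ | ⟨h, _⟩ <;> rw [h] <;> linarith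

lemma Real.cos_ne_zero_of_mem_Icc {β : ℝ} (hβ : β ∈ Set.Icc 0 π) (hβ' : β ≠ π / 2) :
    cos β ≠ 0 := fun h ↦
  hβ' <| injOn_cos hβ ⟨by positivity, by linarith [pi_pos]⟩ (by rw [h, cos_pi_div_two])

theorem stmt_4_general (β θ : ℝ) (hβ0 : 0 < β) (hβπ : β < Real.pi) (hβ : β ≠ Real.pi / 2) :
    ‖2 * (1 + Complex.exp (-Complex.I * θ))
        - 3 * Complex.exp (-Complex.I * θ) * (Real.cos β) ^ 2‖ <
      ‖(4 - (Real.cos β : ℂ) ^ 2)‖ := by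
  set c : ℝ := Real.cos β ^ 2 with hc
  have hc0 : 0 < c := pow_two_pos_of_ne_zero (Real.cos_ne_zero_of_mem_Icc ⟨hβ0.le, hβπ.le⟩ hβ)
  have hc1 : c < 1 := Real.cos_sq_lt_one_of_pos_of_lt_pi hβ0 hβπ
  have hz : ‖Complex.exp (-Complex.I * θ)‖ = 1 := by
    rw [neg_mul, mul_comm, ← neg_mul, ← ofReal_neg, norm_exp_ofReal_mul_I]
  have hlhs : 2 * (1 + Complex.exp (-Complex.I * θ))
        - 3 * Complex.exp (-Complex.I * θ) * Real.cos β ^ 2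
      = 2 + ((2 - 3 * c : ℝ) : ℂ) * Complex.exp (-Complex.I * θ) := by
    push_cast [hc]; ring
  have hrhs : ‖(4 - (Real.cos β : ℂ) ^ 2)‖ = 4 - c := by
    rw [show (4 - (Real.cos β : ℂ) ^ 2) = ((4 - c : ℝ) : ℂ) by push_cast [hc]; ring,
      Complex.norm_real, Real.norm_of_nonneg (by linarith)]
  rw [hlhs, hrhs]
  exact norm_two_add_mul_lt hc0 hc1 hz

theorem stmt_4 (β θ : ℝ) (hβ0 : 0 < β) (hβπ : β < Real.pi) (hβ : β ≠ Real.pi / 2)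
    (hθ : ∀ n : ℤ, θ ≠ n * (2 * Real.pi)) :
    ‖2 * (1 + Complex.exp (-Complex.I * θ))
        - 3 * Complex.exp (-Complex.I * θ) * (Real.cos β) ^ 2‖ <
      ‖(4 - (Real.cos β : ℂ) ^ 2)‖ :=
  stmt_4_general β θ hβ0 hβπ hβ
end

section
/- Let β ∈ (0, π), θ ∈ ℝ, and consider the quadratic polynomial t(z) = 3z² + 2(2cos β + e^{−iθ})z + (2cos β e^{−iθ} + 1) over ℂ. Then every complex root z of t satisfies |z| ≤ 1. -/
/-!
With `a = 2 cos β = e^{iβ} + e^{-iβ}` and `w = e^{-iθ}`, the quadratic is the derivative of the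
cubic `(z + w)(z² + a z + 1) = (z + w)(z + e^{iβ})(z + e^{-iβ})`, whose roots all lie on the unit
circle. By the Gauss–Lucas theorem the roots of the derivative lie in the convex hull of these,
hence in the closed unit disc.
-/

namespace Polynomial

theorem norm_le_of_isRoot_derivative {P : ℂ[X]} (hP : 0 < P.degree) {R : ℝ}
    (hroots : ∀ w, P.IsRoot w → ‖w‖ ≤ R) {z : ℂ} (hz : P.derivative.IsRoot z) : ‖z‖ ≤ R := by
  have hP' : P.derivative ≠ 0 := by
    rw [Ne, derivative_eq_zero]
    exact (natDegree_pos_iff_degree_pos.mpr hP).ne'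
  have hball : P.rootSet ℂ ⊆ Metric.closedBall 0 R := fun w hw => by
    rw [mem_rootSet] at hw
    simpa using hroots w (by simpa using hw.2)
  have hz' : z ∈ P.derivative.rootSet ℂ := by
    rw [mem_rootSet]
    simpa [hP'] using hz
  simpa using convexHull_min hball (convex_closedBall 0 R)
    (rootSet_derivative_subset_convexHull_rootSet hP hz')

theorem norm_le_of_isRoot_derivative_prod_X_sub_C {s : Multiset ℂ} (hs : s ≠ 0) {R : ℝ}
    (hsR : ∀ w ∈ s, ‖w‖ ≤ R) {z : ℂ}
    (hz : (s.map fun w => X - C w).prod.derivative.IsRoot z) : ‖z‖ ≤ R := by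
  have hmonic : (s.map fun w => X - C w).prod.Monic :=
    monic_multiset_prod_of_monic _ _ fun _ _ => monic_X_sub_C _
  refine norm_le_of_isRoot_derivative ?_ (fun w hw => hsR w ?_) hz
  · rw [degree_eq_natDegree hmonic.ne_zero, natDegree_multiset_prod_X_sub_C_eq_card]
    exact_mod_cast Multiset.card_pos.mpr hs
  · rwa [← roots_multiset_prod_X_sub_C s, mem_roots hmonic.ne_zero]

end Polynomial

open Complex Real

theorem stmt_10_general (β θ : ℝ) (z : ℂ)
    (hz : 3 * z ^ 2 + 2 * (2 * Real.cos β + Complex.exp (-Complex.I * θ)) * z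
        + (2 * Real.cos β * Complex.exp (-Complex.I * θ) + 1) = 0) :
    ‖z‖ ≤ 1 := by
  have hunit (t : ℝ) : ‖-exp (t * I)‖ = 1 := by rw [norm_neg, norm_exp_ofReal_mul_I]
  have hcos : (2 * Real.cos β : ℂ) = exp (β * I) + exp (-β * I) := by
    push_cast
    rw [two_cos]
  have hθ : exp (-I * θ) = exp ((-θ : ℝ) * I) := by
    push_cast
    ring_nf
  have hinv : exp (β * I) * exp (-(β * I)) = 1 := by
    rw [← Complex.exp_add, add_neg_cancel, Complex.exp_zero]
  refine Polynomial.norm_le_of_isRoot_derivative_prod_X_sub_C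
    (s := {-exp (β * I), -exp ((-β : ℝ) * I), -exp ((-θ : ℝ) * I)}) (by simp) ?_ ?_
  · intro w hw
    simp only [Multiset.insert_eq_cons, Multiset.mem_cons, Multiset.mem_singleton] at hw
    rcases hw with rfl | rfl | rfl <;> exact (hunit _).le
  · rw [Polynomial.IsRoot, ← hz, hcos, hθ]
    simp only [ofReal_neg, neg_mul, Multiset.insert_eq_cons, Multiset.map_cons, map_neg,
      sub_neg_eq_add, Multiset.map_singleton, Multiset.prod_cons, Multiset.prod_singleton,
      Polynomial.derivative_mul, Polynomial.derivative_add, Polynomial.derivative_X,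
      Polynomial.derivative_C, add_zero, one_mul, mul_one, Polynomial.eval_add,
      Polynomial.eval_mul, Polynomial.eval_X, Polynomial.eval_C]
    linear_combination hinv

theorem stmt_10 (β θ : ℝ) (hβ0 : 0 < β) (hβπ : β < Real.pi) (z : ℂ)
    (hz : 3 * z ^ 2 + 2 * (2 * Real.cos β + Complex.exp (-Complex.I * θ)) * z
        + (2 * Real.cos β * Complex.exp (-Complex.I * θ) + 1) = 0) :
    ‖z‖ ≤ 1 :=
  stmt_10_general β θ z hz
end

section
/- Let β ∈ (0, π) and θ ∈ ℝ, and let t(z) = 2z³ + 3cos β · z² + (1 + e^{−iθ})z + e^{−iθ}cos β over ℂ. Then every complex root z of t satisfies |z| ≤ 1. -/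
/-! Split the cubic as `2 z² (z + c) + z (c z + 1) + e^{-iθ} (z + c)` with `c = cos β`.
For `|z| ≥ 1` one has `|c z + 1| ≤ |z + c|`, so a root satisfies
`|z + c| = |2 z² (z + c) + z (c z + 1)| ≥ |z| (2|z| - 1) |z + c|`,
which forces `|z| ≤ 1` since `z + c ≠ 0` when `|z| > 1 ≥ |c|`. -/

open Complex Real ComplexConjugate

theorem Complex.normSq_add_sub_normSq_conj_mul_add_one (z c : ℂ) :
    normSq (z + c) - normSq (conj c * z + 1) = (normSq z - 1) * (1 - normSq c) := by
  simp only [normSq_apply, add_re, add_im, mul_re, mul_im, conj_re, conj_im, one_re, one_im]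
  ring

theorem Complex.norm_conj_mul_add_one_le_norm_add {z c : ℂ} (hz : 1 ≤ ‖z‖) (hc : ‖c‖ ≤ 1) :
    ‖conj c * z + 1‖ ≤ ‖z + c‖ := by
  have hz' : 1 ≤ normSq z := by rw [← Complex.sq_norm]; nlinarith
  have hc' : normSq c ≤ 1 := by rw [← Complex.sq_norm]; nlinarith [norm_nonneg c]
  have key := normSq_add_sub_normSq_conj_mul_add_one z c
  have hsq : ‖conj c * z + 1‖ ^ 2 ≤ ‖z + c‖ ^ 2 := by
    rw [Complex.sq_norm, Complex.sq_norm]; nlinarith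
  exact (pow_le_pow_iff_left₀ (norm_nonneg _) (norm_nonneg _) two_ne_zero).mp hsq

theorem Complex.norm_ofReal_mul_add_one_le_norm_add {z : ℂ} {c : ℝ} (hz : 1 ≤ ‖z‖)
    (hc : |c| ≤ 1) : ‖(c : ℂ) * z + 1‖ ≤ ‖z + c‖ := by
  simpa using norm_conj_mul_add_one_le_norm_add (c := c) hz (by simpa using hc)

theorem stmt_11_general (β θ : ℝ) (z : ℂ)
    (hz : 2 * z ^ 3 + 3 * Real.cos β * z ^ 2 + (1 + Complex.exp (-Complex.I * θ)) * z
        + Complex.exp (-Complex.I * θ) * Real.cos β = 0) :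
    ‖z‖ ≤ 1 := by
  set c : ℝ := Real.cos β
  by_contra! hz1
  have hc : |c| ≤ 1 := abs_cos_le_one β
  have hroot : ‖z + c‖ = ‖2 * z ^ 2 * (z + c) + z * (c * z + 1)‖ := by
    have hsplit : 2 * z ^ 2 * (z + c) + z * (c * z + 1) = -(exp (-I * θ) * (z + c)) := by
      linear_combination hz
    rw [hsplit, norm_neg, norm_mul, norm_exp]
    simp
  have hlower : ‖z‖ * (2 * ‖z‖ - 1) * ‖z + c‖ ≤ ‖2 * z ^ 2 * (z + c) + z * (c * z + 1)‖ := by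
    have hsmall := norm_ofReal_mul_add_one_le_norm_add hz1.le hc
    calc ‖z‖ * (2 * ‖z‖ - 1) * ‖z + c‖
        ≤ ‖2 * z ^ 2 * (z + c)‖ - ‖z * (c * z + 1)‖ := by
          simp only [norm_mul, norm_pow, Complex.norm_ofNat]
          nlinarith [norm_nonneg z]
      _ ≤ ‖2 * z ^ 2 * (z + c) + z * (c * z + 1)‖ :=
          norm_sub_le_norm_add _ _
  have hpos : 0 < ‖z + c‖ := by
    have hcz : ‖(c : ℂ)‖ < ‖z‖ := by rw [norm_real, Real.norm_eq_abs]; linarith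
    linarith [norm_sub_le_norm_add z (c : ℂ)]
  nlinarith [mul_pos (show 0 < ‖z‖ * (2 * ‖z‖ - 1) - 1 by nlinarith) hpos]

theorem stmt_11 (β θ : ℝ) (hβ0 : 0 < β) (hβπ : β < Real.pi) (z : ℂ)
    (hz : 2 * z ^ 3 + 3 * Real.cos β * z ^ 2 + (1 + Complex.exp (-Complex.I * θ)) * z
        + Complex.exp (-Complex.I * θ) * Real.cos β = 0) :
    ‖z‖ ≤ 1 :=
  stmt_11_general β θ z hz
end

section
/- Let β ∈ (0, π) with β ≠ π/2 and θ ∈ ℝ with cos θ ≠ 1. Consider the quadratic t(z) = (4 − cos²β)z² + cos β(5 − e^{−iθ})z + 2(1 + e^{−iθ}) − 3e^{−iθ}cos²β over ℂ. Then every complex root z of t satisfies |z| ≤ 1. -/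
open Complex Real

/-!
Write `c = cos β`, `u = e^{-iθ}`, `p(z) = (4 - c²) z² + 5 c z + 2` and `q(z) = 2 - 3 c² - c z`.
The quadratic is `p + u q`, so at a root `|p(z)| = |q(z)|`. For `|c| < 1` an explicit
sum-of-squares certificate shows `|p(z)| > |q(z)|` whenever `|z| > 1`.
-/

/-- The inequality `|q(z)|² < |p(z)|²` for `z = x + i y` with `x² + y² > 1`. -/
lemma sq_add_sq_lt_of_one_lt {c x y : ℝ} (hc : c ^ 2 < 1) (hxy : 1 < x ^ 2 + y ^ 2) :
    (-(c * x) + 2 - 3 * c ^ 2) ^ 2 + (c * y) ^ 2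
      < ((4 - c ^ 2) * (x ^ 2 - y ^ 2) + 5 * c * x + 2) ^ 2
        + ((4 - c ^ 2) * (2 * x * y) + 5 * c * y) ^ 2 := by
  set t := x ^ 2 + y ^ 2 - 1 with ht_def
  set a := 4 - c ^ 2 with ha_def
  have ht : 0 < t := by linarith
  have ha : 3 < a := by linarith
  have certificate :
      8 * (64 * a + 24 * t) * (((a * (x ^ 2 - y ^ 2) + 5 * c * x + 2) ^ 2
        + (a * (2 * x * y) + 5 * c * y) ^ 2) - ((-(c * x) + 2 - 3 * c ^ 2) ^ 2 + (c * y) ^ 2))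
      = ((64 * a + 24 * t) * x + 8 * a * c * (8 + 5 * t)) ^ 2
        + 24 * t * (64 * a + 24 * t) * y ^ 2
        + t * (64 * a * (1 - c ^ 2) * (104 - 96 * c ^ 2))
        + t ^ 2 * (64 * (1 - c ^ 2) * (33 * c ^ 4 - 269 * c ^ 2 + 455))
        + t ^ 3 * (192 * (a ^ 2 - 3)) := by
    rw [ht_def, ha_def]; ring
  have h₁ : 0 ≤ 24 * t * (64 * a + 24 * t) * y ^ 2 := by positivity
  have h₂ : 0 < t * (64 * a * (1 - c ^ 2) * (104 - 96 * c ^ 2)) :=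
    mul_pos ht (mul_pos (mul_pos (by linarith) (by linarith)) (by linarith))
  have h₃ : 0 ≤ t ^ 2 * (64 * (1 - c ^ 2) * (33 * c ^ 4 - 269 * c ^ 2 + 455)) :=
    mul_nonneg (sq_nonneg t) (mul_nonneg (by linarith) (by nlinarith))
  have h₄ : 0 ≤ t ^ 3 * (192 * (a ^ 2 - 3)) := mul_nonneg (by positivity) (by nlinarith)
  have hpos : 0 < 8 * (64 * a + 24 * t) := by linarith
  nlinarith [sq_nonneg ((64 * a + 24 * t) * x + 8 * a * c * (8 + 5 * t))]

lemma normSq_lt_normSq_of_one_lt_norm {c : ℝ} (hc : c ^ 2 < 1) {z : ℂ} (hz : 1 < ‖z‖) :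
    normSq (-(c : ℂ) * z + 2 - 3 * c ^ 2)
      < normSq ((4 - (c : ℂ) ^ 2) * z ^ 2 + 5 * c * z + 2) := by
  have hxy : 1 < z.re ^ 2 + z.im ^ 2 := by
    rw [← one_lt_sq_iff₀ (norm_nonneg z), Complex.sq_norm, normSq_apply] at hz
    linarith
  have key := sq_add_sq_lt_of_one_lt hc hxy
  simp only [normSq_apply, sq, add_re, add_im, sub_re, sub_im, mul_re, mul_im, neg_re, neg_im,
    ofReal_re, ofReal_im, re_ofNat, im_ofNat] at key ⊢
  linarith

theorem stmt_12_general (β θ : ℝ) (hβ0 : 0 < β) (hβπ : β < Real.pi) (z : ℂ)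
    (hz : (4 - (Real.cos β : ℂ) ^ 2) * z ^ 2
        + (Real.cos β : ℂ) * (5 - Complex.exp (-Complex.I * θ)) * z
        + 2 * (1 + Complex.exp (-Complex.I * θ))
        - 3 * Complex.exp (-Complex.I * θ) * (Real.cos β) ^ 2 = 0) :
    ‖z‖ ≤ 1 := by
  have hc : Real.cos β ^ 2 < 1 := by
    nlinarith [sin_pos_of_pos_of_lt_pi hβ0 hβπ, Real.sin_sq_add_cos_sq β]
  have hu : normSq (exp (-I * θ)) = 1 := by
    rw [normSq_eq_norm_sq, norm_exp]
    simp
  have hpq : (4 - (Real.cos β : ℂ) ^ 2) * z ^ 2 + 5 * Real.cos β * z + 2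
      = -exp (-I * θ) * (-(Real.cos β : ℂ) * z + 2 - 3 * Real.cos β ^ 2) := by
    linear_combination hz
  by_contra! hgt
  have hlt := normSq_lt_normSq_of_one_lt_norm hc hgt
  rw [hpq, normSq_mul, normSq_neg, hu, one_mul] at hlt
  exact lt_irrefl _ hlt

theorem stmt_12 (β θ : ℝ) (hβ0 : 0 < β) (hβπ : β < Real.pi) (hβ : β ≠ Real.pi / 2)
    (hθ : Real.cos θ ≠ 1) (z : ℂ)
    (hz : (4 - (Real.cos β : ℂ) ^ 2) * z ^ 2
        + (Real.cos β : ℂ) * (5 - Complex.exp (-Complex.I * θ)) * z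
        + 2 * (1 + Complex.exp (-Complex.I * θ))
        - 3 * Complex.exp (-Complex.I * θ) * (Real.cos β) ^ 2 = 0) :
    ‖z‖ ≤ 1 :=
  stmt_12_general β θ hβ0 hβπ z hz
end

section
/- Let β ∈ (0, π) and θ ∈ ℝ, and set z₀ = (−2cos β + 4e^{−iθ}cos²β − 3e^{−iθ} + e^{iθ}) / (4 − 2cos²β − 2cos β cos θ). Then |z₀| ≤ 1. -/
/-! With c = cos β, the numerator N and the denominator D satisfy the identity
`D² - ‖N‖² = 12 (1 - c²) (c - cos θ)²`, whose right side is nonnegative since c² ≤ 1. Hence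
‖N‖ ≤ |D|, and ‖N / D‖ ≤ 1 (trivially so when D = 0, where the quotient is 0). -/

open Complex Real

lemma exp_I_mul_ofReal_eq_mk (θ : ℝ) :
    Complex.exp (Complex.I * θ) = ⟨Real.cos θ, Real.sin θ⟩ := by
  rw [mul_comm]
  exact Complex.ext (Complex.exp_ofReal_mul_I_re θ) (Complex.exp_ofReal_mul_I_im θ)

lemma exp_neg_I_mul_ofReal_eq_mk (θ : ℝ) :
    Complex.exp (-Complex.I * θ) = ⟨Real.cos θ, -Real.sin θ⟩ := by
  rw [neg_mul, ← mul_neg, ← Complex.ofReal_neg, exp_I_mul_ofReal_eq_mk, Real.cos_neg, Real.sin_neg]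

lemma norm_sq_numerator_add_eq_sq_denominator (c θ : ℝ) :
    ‖-2 * c + 4 * Complex.exp (-Complex.I * θ) * c ^ 2 - 3 * Complex.exp (-Complex.I * θ)
        + Complex.exp (Complex.I * θ)‖ ^ 2 + 12 * (1 - c ^ 2) * (c - Real.cos θ) ^ 2
      = (4 - 2 * c ^ 2 - 2 * c * Real.cos θ) ^ 2 := by
  rw [exp_I_mul_ofReal_eq_mk, exp_neg_I_mul_ofReal_eq_mk, Complex.sq_norm, Complex.normSq_apply]
  simp only [Complex.add_re, Complex.sub_re, Complex.mul_re, Complex.add_im, Complex.sub_im,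
    Complex.mul_im, Complex.ofReal_re, Complex.ofReal_im, Complex.re_ofNat, Complex.im_ofNat,
    Complex.neg_re, Complex.neg_im, sq]
  linear_combination (16 * (1 - c ^ 2) ^ 2) * Real.sin_sq_add_cos_sq θ

lemma norm_numerator_le_abs_denominator (c θ : ℝ) (hc : c ^ 2 ≤ 1) :
    ‖-2 * c + 4 * Complex.exp (-Complex.I * θ) * c ^ 2 - 3 * Complex.exp (-Complex.I * θ)
        + Complex.exp (Complex.I * θ)‖ ≤ |4 - 2 * c ^ 2 - 2 * c * Real.cos θ| := by
  have hsum := norm_sq_numerator_add_eq_sq_denominator c θ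
  have hdefect : 0 ≤ 12 * (1 - c ^ 2) * (c - Real.cos θ) ^ 2 := by
    have := sub_nonneg.2 hc
    positivity
  simpa only [abs_norm] using sq_le_sq.mp (le_of_add_le_of_nonneg_left hsum.le hdefect)

theorem stmt_16_general (β θ : ℝ) :
    ‖((-2 * Real.cos β + 4 * Complex.exp (-Complex.I * θ) * (Real.cos β) ^ 2
        - 3 * Complex.exp (-Complex.I * θ) + Complex.exp (Complex.I * θ)) /
      ((4 : ℝ) - 2 * Real.cos β ^ 2 - 2 * Real.cos β * Real.cos θ : ℝ))‖ ≤ 1 := by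
  rw [norm_div, Complex.norm_real, Real.norm_eq_abs]
  exact div_le_one_of_le₀
    (norm_numerator_le_abs_denominator _ θ (Real.cos_sq_le_one β)) (abs_nonneg _)

theorem stmt_16 (β θ : ℝ) (hβ0 : 0 < β) (hβπ : β < Real.pi)
    (hden : (4 : ℝ) - 2 * Real.cos β ^ 2 - 2 * Real.cos β * Real.cos θ ≠ 0) :
    ‖((-2 * Real.cos β + 4 * Complex.exp (-Complex.I * θ) * (Real.cos β) ^ 2
        - 3 * Complex.exp (-Complex.I * θ) + Complex.exp (Complex.I * θ)) /
      ((4 : ℝ) - 2 * Real.cos β ^ 2 - 2 * Real.cos β * Real.cos θ : ℝ))‖ ≤ 1 :=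
  stmt_16_general β θ
end
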